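/- Let N be a positive integer and x a real number. Let A be the N×N real matrix (indices running from 1 to N) with entries a_{ij} = i(i+1) if i = j, a_{ij} = 2ix if i = j+1, a_{ij} = x²−1 if i = j+2, and a_{ij} = 0 otherwise, and let B be the N×N real matrix with entries b_{ij} = (-1)^{i-j} (j-1)! [(x+1)^{i-j+1} − (x−1)^{i-j+1}] / (2(i+1)!) if i ≥ j and b_{ij} = 0 if i < j. Then A·B = I and B·A = I, i.e. A is invertible with inverse B. -/

import Mathlib

/-!
Lower triangular Toeplitz matrices multiply like truncated power series. After rescaling rows
and columns by factorials, `A` becomes the Toeplitz matrix of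
`1 + 2x X + (x² - 1) X² = (1 + (x + 1) X) (1 + (x - 1) X)` and `B` that of its inverse
`∑ (-1)ᵈ ((x + 1)ᵈ⁺¹ - (x - 1)ᵈ⁺¹) / 2 · Xᵈ`, so `A * B = 1`; for square matrices this forces
`B * A = 1`.
-/

open Finset Matrix PowerSeries

namespace PowerSeries

variable {R : Type*} [Semiring R]

noncomputable def lowerToeplitz (n : ℕ) (φ : R⟦X⟧) : Matrix (Fin n) (Fin n) R :=
  Matrix.of fun i j => if j ≤ i then coeff ((i : ℕ) - j) φ else 0

theorem lowerToeplitz_one (n : ℕ) : lowerToeplitz n (1 : R⟦X⟧) = 1 := by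
  ext i j
  simp only [lowerToeplitz, of_apply, coeff_one, one_apply, Fin.ext_iff]
  split_ifs <;> first | rfl | omega

theorem lowerToeplitz_mul (n : ℕ) (φ ψ : R⟦X⟧) :
    lowerToeplitz n φ * lowerToeplitz n ψ = lowerToeplitz n (φ * ψ) := by
  ext i j
  simp only [lowerToeplitz, mul_apply, of_apply, coeff_mul, ite_mul, zero_mul, mul_ite, mul_zero]
  rw [← sum_filter, ← sum_filter]
  split_ifs with hji
  · refine sum_bij' (fun k _ => ((i : ℕ) - k, (k : ℕ) - j))
      (fun p hp => ⟨j + p.2, by have := HasAntidiagonal.mem_antidiagonal.mp hp; omega⟩)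
      ?_ ?_ ?_ ?_ fun _ _ => rfl <;>
    simp only [mem_filter, mem_univ, true_and, HasAntidiagonal.mem_antidiagonal,
      Fin.le_iff_val_le_val, Fin.ext_iff, Prod.ext_iff] <;>
    omega
  · refine sum_eq_zero fun k hk => ?_
    simp only [mem_filter] at hk
    exact absurd (hk.1.2.trans hk.2) hji

end PowerSeries

noncomputable def aSeries (x : ℝ) : ℝ⟦X⟧ := 1 + C (2 * x) * X + C (x ^ 2 - 1) * X ^ 2

noncomputable def bSeries (x : ℝ) : ℝ⟦X⟧ :=
  mk fun d => (-1) ^ d * ((x + 1) ^ (d + 1) - (x - 1) ^ (d + 1)) / 2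

theorem coeff_aSeries (x : ℝ) (n : ℕ) : coeff n (aSeries x) =
    if n = 0 then 1 else if n = 1 then 2 * x else if n = 2 then x ^ 2 - 1 else 0 := by
  simp only [aSeries, map_add, coeff_one, coeff_C_mul, coeff_X, coeff_X_pow]
  split_ifs <;> first | (exfalso; omega) | ring

theorem aSeries_mul_bSeries (x : ℝ) : aSeries x * bSeries x = 1 := by
  ext n
  simp only [aSeries, bSeries, add_mul, one_mul, mul_assoc, map_add, coeff_C_mul,
    coeff_X_pow_mul', coeff_one, coeff_mk]
  rw [← pow_one X, coeff_X_pow_mul']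
  rcases n with _ | _ | n <;> simp <;> ring

theorem entryA_mul_inv_factorial (x : ℝ) (i j : ℕ) :
    (if i = j then ((i : ℝ) + 1) * ((i : ℝ) + 2) else if i = j + 1 then 2 * ((i : ℝ) + 1) * x
      else if i = j + 2 then x ^ 2 - 1 else 0) * ((j + 2).factorial : ℝ)⁻¹ =
      (i.factorial : ℝ)⁻¹ * (if j ≤ i then coeff (i - j) (aSeries x) else 0) := by
  rcases le_or_gt j i with h | h
  · obtain ⟨d, rfl⟩ := Nat.exists_eq_add_of_le h
    rcases d with _ | _ | _ | d <;> simp [coeff_aSeries, Nat.factorial_succ] <;> field_simp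
    ring
  · rw [if_neg (by omega), if_neg (by omega), if_neg (by omega), if_neg (by omega), zero_mul,
      mul_zero]

theorem entryB_eq_scaled_coeff_bSeries (x : ℝ) (i j : ℕ) :
    (if j ≤ i then (-1 : ℝ) ^ (i - j) * j.factorial *
        ((x + 1) ^ (i - j + 1) - (x - 1) ^ (i - j + 1)) / (2 * (i + 2).factorial) else 0) =
      ((i + 2).factorial : ℝ)⁻¹ * (if j ≤ i then coeff (i - j) (bSeries x) else 0) *
        j.factorial := by
  split_ifs
  · rw [bSeries, coeff_mk]
    ring
  · simp

theorem tridiagonal_matrix_inverse (N : ℕ) (x : ℝ)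
    (A B : Matrix (Fin N) (Fin N) ℝ)
    (hA : ∀ i j : Fin N, A i j =
      if (i : ℕ) = (j : ℕ) then (((i : ℕ) + 1 : ℝ) * ((i : ℕ) + 2 : ℝ))
      else if (i : ℕ) = (j : ℕ) + 1 then 2 * ((i : ℕ) + 1 : ℝ) * x
      else if (i : ℕ) = (j : ℕ) + 2 then x ^ 2 - 1
      else 0)
    (hB : ∀ i j : Fin N, B i j =
      if (j : ℕ) ≤ (i : ℕ) then
        (-1 : ℝ) ^ ((i : ℕ) - (j : ℕ)) * (Nat.factorial (j : ℕ)) *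
          ((x + 1) ^ ((i : ℕ) - (j : ℕ) + 1) - (x - 1) ^ ((i : ℕ) - (j : ℕ) + 1)) /
          (2 * Nat.factorial ((i : ℕ) + 2))
      else 0) :
    A * B = 1 ∧ B * A = 1 := by
  set D : Matrix (Fin N) (Fin N) ℝ := diagonal fun i => (((i : ℕ) + 2).factorial : ℝ)⁻¹
  set F : Matrix (Fin N) (Fin N) ℝ := diagonal fun i => ((i : ℕ).factorial : ℝ)
  set F' : Matrix (Fin N) (Fin N) ℝ := diagonal fun i => ((i : ℕ).factorial : ℝ)⁻¹
  have hB' : B = D * lowerToeplitz N (bSeries x) * F := by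
    ext i j
    rw [hB, mul_diagonal, diagonal_mul, entryB_eq_scaled_coeff_bSeries]
    rfl
  have hAD : A * D = F' * lowerToeplitz N (aSeries x) := by
    ext i j
    rw [mul_diagonal, diagonal_mul, hA, entryA_mul_inv_factorial]
    rfl
  have hAB : A * B = 1 :=
    calc A * B = A * D * lowerToeplitz N (bSeries x) * F := by
          simp only [hB', Matrix.mul_assoc]
      _ = F' * (lowerToeplitz N (aSeries x) * lowerToeplitz N (bSeries x)) * F := by
          rw [hAD, Matrix.mul_assoc F']
      _ = F' * F := by
          rw [lowerToeplitz_mul, aSeries_mul_bSeries, lowerToeplitz_one, Matrix.mul_one]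
      _ = 1 := by
          rw [diagonal_mul_diagonal, ← diagonal_one]
          congr with i
          exact inv_mul_cancel₀ (by positivity)
  exact ⟨hAB, mul_eq_one_comm.mp hAB⟩
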